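/- Let Δ be the operator Δf = -f_tt + (sin t / cos t) f_t - (1/cos² t) f_φφ and x₁(t,φ) = (a + r cos t) cos φ. Then Δ³ x₁ = (4/cos² t - 42/cos⁴ t + 45/cos⁶ t) a cos φ + 8 r cos t cos φ on the domain where cos t ≠ 0. -/

import Mathlib

/-!
On a separated function `g t * cos φ` the operator `Δ` acts as the ordinary differential
operator `L g = -g'' + tan t * g' + g / cos² t` (`radialDelta`) on the profile `g`. On powers
of `cos` one finds `L (cos^m) = (1 - m²) cos^(m-2) + (m² + m) cos^m`, so `L` preserves Laurent
polynomials in `cos`, and three applications to `a + r cos t` give the stated profile. All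
identities hold on the open set `cos t ≠ 0`, which is enough because `L` is local.
-/

open Real

/-- partial derivative in the first variable `t` -/
noncomputable def pderivT (f : ℝ → ℝ → ℝ) : ℝ → ℝ → ℝ := fun t φ => deriv (fun s => f s φ) t

/-- partial derivative in the second variable `φ` -/
noncomputable def pderivP (f : ℝ → ℝ → ℝ) : ℝ → ℝ → ℝ := fun t φ => deriv (fun ψ => f t ψ) φ

/-- The Beltrami operator of the third fundamental form of an anchor ring:
`Δf = -f_tt + (sin t / cos t) f_t - (1/cos² t) f_φφ`. -/
noncomputable def DeltaIII (f : ℝ → ℝ → ℝ) : ℝ → ℝ → ℝ := fun t φ =>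
  - pderivT (pderivT f) t φ + (Real.sin t / Real.cos t) * pderivT f t φ
    - (1 / (Real.cos t) ^ 2) * pderivP (pderivP f) t φ

open Set Topology

theorem pderivT_mul (g h : ℝ → ℝ) :
    pderivT (fun t φ => g t * h φ) = fun t φ => deriv g t * h φ := by
  ext t φ; exact deriv_mul_const_field _

theorem pderivP_mul (g h : ℝ → ℝ) :
    pderivP (fun t φ => g t * h φ) = fun t φ => g t * deriv h φ := by
  ext t φ; exact congrFun (deriv_const_mul_field' _) φ

noncomputable def radialDelta (g : ℝ → ℝ) : ℝ → ℝ := fun t =>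
  -deriv (deriv g) t + (sin t / cos t) * deriv g t + (1 / cos t ^ 2) * g t

-- No differentiability of `g` is needed: `deriv (fun s => g s * c) = deriv g * c` holds for
-- every `g`, both sides being `0` where `g` is not differentiable.
theorem DeltaIII_mul_cos (g : ℝ → ℝ) :
    DeltaIII (fun t φ => g t * cos φ) = fun t φ => radialDelta g t * cos φ := by
  ext t φ
  simp only [DeltaIII, radialDelta, pderivT_mul, pderivP_mul, Real.deriv_cos', deriv.fun_neg,
    Real.deriv_sin]
  ring

theorem iterate_DeltaIII_mul_cos (g : ℝ → ℝ) (n : ℕ) :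
    DeltaIII^[n] (fun t φ => g t * cos φ) = fun t φ => radialDelta^[n] g t * cos φ := by
  induction n with
  | zero => rfl
  | succ n ih => rw [Function.iterate_succ_apply', ih, DeltaIII_mul_cos, Function.iterate_succ_apply']

theorem radialDelta_congr {f g : ℝ → ℝ} {t : ℝ} (h : f =ᶠ[𝓝 t] g) :
    radialDelta f t = radialDelta g t := by
  simp only [radialDelta, h.deriv.deriv_eq, h.deriv_eq, h.eq_of_nhds]

theorem Set.EqOn.radialDelta {f g : ℝ → ℝ} {U : Set ℝ} (hU : IsOpen U) (h : EqOn f g U) :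
    EqOn (radialDelta f) (radialDelta g) U := fun _ ht =>
  radialDelta_congr (h.eventuallyEq_of_mem (hU.mem_nhds ht))

theorem radialDelta_eq_of_hasDerivAt {g g' : ℝ → ℝ} {g'' t : ℝ}
    (hg : ∀ᶠ s in 𝓝 t, HasDerivAt g (g' s) s) (hg' : HasDerivAt g' g'' t) :
    radialDelta g t = -g'' + (sin t / cos t) * g' t + (1 / cos t ^ 2) * g t := by
  have hderiv : deriv g =ᶠ[𝓝 t] g' := hg.mono fun _ hs => hs.deriv
  rw [radialDelta, hderiv.deriv_eq, hderiv.eq_of_nhds, hg'.deriv]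

theorem hasDerivAt_cos_zpow (m : ℤ) {t : ℝ} (h : cos t ≠ 0) :
    HasDerivAt (fun s => cos s ^ m) (-m * sin t * cos t ^ (m - 1)) t :=
  ((hasDerivAt_zpow m (cos t) (Or.inl h)).comp t (hasDerivAt_cos t)).congr_deriv (by ring)

theorem hasDerivAt_deriv_cos_zpow (m : ℤ) {t : ℝ} (h : cos t ≠ 0) :
    HasDerivAt (fun s => -m * sin s * cos s ^ (m - 1))
      (m * ((m - 1) * sin t ^ 2 * cos t ^ (m - 2) - cos t ^ m)) t := by
  refine (((hasDerivAt_sin t).const_mul (-m : ℝ)).fun_mul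
    (hasDerivAt_cos_zpow (m - 1) h)).congr_deriv ?_
  rw [show m - 1 - 1 = m - 2 by ring, zpow_sub_one₀ h]
  push_cast
  field_simp
  ring

theorem radialDelta_sum_mul_cos_zpow {ι : Type*} (s : Finset ι) (c : ι → ℝ) (e : ι → ℤ) {t : ℝ}
    (h : cos t ≠ 0) :
    radialDelta (fun u => ∑ i ∈ s, c i * cos u ^ e i) t =
      ∑ i ∈ s, c i * ((1 - e i ^ 2) * cos t ^ (e i - 2) + (e i ^ 2 + e i) * cos t ^ e i) := by
  have hU : ∀ᶠ u in 𝓝 t, cos u ≠ 0 := continuous_cos.continuousAt.eventually_ne h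
  rw [radialDelta_eq_of_hasDerivAt
    (hU.mono fun u hu => HasDerivAt.fun_sum fun i _ => (hasDerivAt_cos_zpow (e i) hu).const_mul (c i))
    (HasDerivAt.fun_sum fun i _ => (hasDerivAt_deriv_cos_zpow (e i) h).const_mul (c i))]
  simp only [Finset.mul_sum, ← Finset.sum_neg_distrib, ← Finset.sum_add_distrib]
  refine Finset.sum_congr rfl fun i _ => ?_
  rw [zpow_sub₀ h, zpow_sub_one₀ h, zpow_two]
  field_simp
  linear_combination (-c i * (e i : ℝ) ^ 2) * sin_sq_add_cos_sq t

theorem iterate_radialDelta_three_eqOn (a r : ℝ) :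
    EqOn (radialDelta^[3] fun s => a + r * cos s)
      (fun s => (4 / cos s ^ 2 - 42 / cos s ^ 4 + 45 / cos s ^ 6) * a + 8 * r * cos s)
      {s | cos s ≠ 0} := by
  have hU : IsOpen {s | cos s ≠ 0} := isOpen_ne_fun continuous_cos continuous_const
  have step1 : EqOn (radialDelta fun s => a + r * cos s)
      (fun s => a / cos s ^ 2 + 2 * r * cos s) {s | cos s ≠ 0} := by
    intro s hs
    convert radialDelta_sum_mul_cos_zpow Finset.univ ![a, r] ![0, 1] hs using 2
    · ext u; simp [Fin.sum_univ_succ]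
    · simp [Fin.sum_univ_succ]; ring
  have step2 : EqOn (radialDelta fun s => a / cos s ^ 2 + 2 * r * cos s)
      (fun s => 2 * a / cos s ^ 2 - 3 * a / cos s ^ 4 + 4 * r * cos s) {s | cos s ≠ 0} := by
    intro s hs
    convert radialDelta_sum_mul_cos_zpow Finset.univ ![a, 2 * r] ![-2, 1] hs using 2
    · ext u; simp [Fin.sum_univ_succ, div_eq_mul_inv]
    · simp [Fin.sum_univ_succ]; ring
  have step3 : EqOn (radialDelta fun s => 2 * a / cos s ^ 2 - 3 * a / cos s ^ 4 + 4 * r * cos s)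
      (fun s => (4 / cos s ^ 2 - 42 / cos s ^ 4 + 45 / cos s ^ 6) * a + 8 * r * cos s)
      {s | cos s ≠ 0} := by
    intro s hs
    convert radialDelta_sum_mul_cos_zpow Finset.univ ![2 * a, -3 * a, 4 * r] ![-2, -4, 1] hs
      using 2
    · ext u; simp [Fin.sum_univ_succ, div_eq_mul_inv, sub_eq_add_neg, add_assoc]
    · simp [Fin.sum_univ_succ]; ring
  exact (((step1.radialDelta hU).trans step2).radialDelta hU).trans step3

theorem stmt_4 (a r : ℝ) (t φ : ℝ) (h : Real.cos t ≠ 0) :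
    (DeltaIII^[3] (fun t φ => (a + r * Real.cos t) * Real.cos φ)) t φ =
      (4 / (Real.cos t) ^ 2 - 42 / (Real.cos t) ^ 4 + 45 / (Real.cos t) ^ 6) * (a * Real.cos φ)
        + 8 * r * Real.cos t * Real.cos φ := by
  rw [iterate_DeltaIII_mul_cos (fun s => a + r * cos s)]
  beta_reduce
  rw [iterate_radialDelta_three_eqOn a r h]
  ring
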